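/- Let ε, k > 0 satisfy k ≤ ε². Under the admissibility assumptions on u, v, w, if u satisfies the fully implicit scheme tested against v, namely (1/k)∫_Ω (u−w)v dx + ∫_Ω ∇u·∇v dx + (1/ε²)∫_Ω f(u) v dx = 0, then u globally minimizes the discrete energy along the line through u in direction v: E(u; w) ≤ E(u + t·v; w) for all t ∈ ℝ. -/

import Mathlib

open MeasureTheory

/-- The double-well potential `F(s) = (1/4)(s² − 1)²`. -/
noncomputable def dwF (s : ℝ) : ℝ := (1 / 4) * (s ^ 2 - 1) ^ 2

/-- Its derivative `f(s) = s³ − s`. -/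
noncomputable def dwf (s : ℝ) : ℝ := s ^ 3 - s

/-- The Ginzburg–Landau energy `J_ε(z) = ∫_Ω ((1/2)|∇z|² + (1/ε²)F(z))`. -/
noncomputable def GLJ {d : ℕ} (Ω : Set (EuclideanSpace ℝ (Fin d))) (ε : ℝ)
    (z : EuclideanSpace ℝ (Fin d) → ℝ) : ℝ :=
  ∫ x in Ω, ((1 / 2) * ‖gradient z x‖ ^ 2 + (1 / ε ^ 2) * dwF (z x))

/-- The discrete energy `E(z; w) = J_ε(z) + (1/(2k)) ∫_Ω (z − w)²`. -/
noncomputable def discE {d : ℕ} (Ω : Set (EuclideanSpace ℝ (Fin d))) (ε k : ℝ)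
    (z w : EuclideanSpace ℝ (Fin d) → ℝ) : ℝ :=
  GLJ Ω ε z + (1 / (2 * k)) * ∫ x in Ω, (z x - w x) ^ 2

/-!
The double well is semiconvex: `F'' = 3s² - 1 ≥ -1`, so `F(a + b) ≥ F(a) + f(a) b - b²/2`.
Hence, pointwise on `Ω`, the energy density of `u + t v` is at least that of `u` plus `t` times
the integrand of the scheme, the remainder `t²/2 (|∇v|² + (1/k - 1/ε²) v²)` being nonnegative
because `k ≤ ε²`. Integrating, the linear term vanishes by the scheme.
-/

@[fun_prop]
theorem continuous_dwF : Continuous dwF := by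
  unfold dwF
  fun_prop

@[fun_prop]
theorem continuous_dwf : Continuous dwf := by
  unfold dwf
  fun_prop

theorem dwF_add_ge (a b : ℝ) : dwF a + dwf a * b - b ^ 2 / 2 ≤ dwF (a + b) := by
  unfold dwF dwf
  linear_combination sq_nonneg (b * (a + b / 2)) + sq_nonneg (a * b) / 2

section Density

variable {E : Type*} [NormedAddCommGroup E] [InnerProductSpace ℝ E]

noncomputable def discEDensity (ε k : ℝ) (p : E) (s r : ℝ) : ℝ :=
  (1 / 2) * ‖p‖ ^ 2 + (1 / ε ^ 2) * dwF s + (1 / (2 * k)) * (s - r) ^ 2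

/-- The integrand of the fully implicit scheme at `s` tested against `b`, i.e. of the first
variation of `discE`. -/
noncomputable def fisDensity (ε k : ℝ) (p q : E) (s b r : ℝ) : ℝ :=
  (1 / k) * ((s - r) * b) + inner ℝ p q + (1 / ε ^ 2) * (dwf s * b)

theorem discEDensity_add_mul_fisDensity_le {ε k : ℝ} (hk : 0 < k) (hkε : k ≤ ε ^ 2)
    (p q : E) (a b r t : ℝ) :
    discEDensity ε k p a r + t * fisDensity ε k p q a b r
      ≤ discEDensity ε k (p + t • q) (a + t * b) r := by
  have hF := mul_le_mul_of_nonneg_left (dwF_add_ge a (t * b))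
    (by positivity : (0 : ℝ) ≤ 1 / ε ^ 2)
  have hεk : 1 / ε ^ 2 ≤ 1 / k := one_div_le_one_div_of_le hk hkε
  unfold discEDensity fisDensity
  rw [norm_add_sq_real, inner_smul_right, norm_smul, mul_pow, Real.norm_eq_abs, sq_abs]
  linear_combination hF + mul_nonneg (sub_nonneg.2 hεk) (sq_nonneg (t * b)) / 2
    + sq_nonneg (t * ‖q‖) / 2

end Density

theorem gradient_add_const_mul {F : Type*} [NormedAddCommGroup F] [InnerProductSpace ℝ F]
    [CompleteSpace F] {f g : F → ℝ} {x : F} (hf : DifferentiableAt ℝ f x)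
    (hg : DifferentiableAt ℝ g x) (t : ℝ) :
    gradient (fun y => f y + t * g y) x = gradient f x + t • gradient g x :=
  (InnerProductSpace.toDual ℝ F).injective <| by
    simp only [toDual_gradient, map_add, map_smul, fderiv_fun_add hf (hg.const_mul t),
      fderiv_const_mul hg]

theorem Bornology.IsBounded.image_prodMk {X α β : Type*} [Bornology α] [Bornology β]
    {s : Set X} {f : X → α} {g : X → β} (hf : IsBounded (f '' s)) (hg : IsBounded (g '' s)) :
    IsBounded ((fun x => (f x, g x)) '' s) :=
  (hf.prod hg).subset Set.image_prodMk_subset_prod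

theorem isBounded_image_of_norm_le {X α : Type*} [SeminormedAddCommGroup α] {s : Set X}
    {f : X → α} (h : ∃ C, ∀ x ∈ s, ‖f x‖ ≤ C) : Bornology.IsBounded (f '' s) :=
  isBounded_iff_forall_norm_le.2 (h.imp fun _ hC => Set.forall_mem_image.2 hC)

theorem integrableOn_comp_of_isBounded_image {X α β : Type*} [MeasurableSpace X]
    {μ : Measure X} {s : Set X} [PseudoMetricSpace α] [ProperSpace α] [NormedAddCommGroup β]
    {Φ : α → β} {G : X → α} (hΦ : Continuous Φ) (hG : AEStronglyMeasurable G μ)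
    (hGs : Bornology.IsBounded (G '' s)) (hs : MeasurableSet s) (hμs : μ s ≠ ⊤) :
    IntegrableOn (fun x => Φ (G x)) s μ := by
  obtain ⟨C, hC⟩ := hGs.isCompact_closure.exists_bound_of_continuousOn hΦ.continuousOn
  refine Measure.integrableOn_of_bounded (M := C) hμs (hΦ.comp_aestronglyMeasurable hG) ?_
  filter_upwards [ae_restrict_mem hs] with x hx
  exact hC _ (subset_closure (Set.mem_image_of_mem G hx))

theorem setIntegral_le_of_add_mul_le {X : Type*} [MeasurableSpace X] {μ : Measure X}
    {s : Set X} {f g h : X → ℝ} (hs : MeasurableSet s) (hf : IntegrableOn f s μ)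
    (hg : IntegrableOn g s μ) (hh : IntegrableOn h s μ) (h0 : ∫ x in s, h x ∂μ = 0) (t : ℝ)
    (hle : ∀ x ∈ s, f x + t * h x ≤ g x) :
    ∫ x in s, f x ∂μ ≤ ∫ x in s, g x ∂μ :=
  calc ∫ x in s, f x ∂μ = ∫ x in s, (f x + t * h x) ∂μ := by
        rw [integral_add hf (hh.const_mul t), integral_const_mul, h0, mul_zero, add_zero]
    _ ≤ ∫ x in s, g x ∂μ :=
        setIntegral_mono_on (Integrable.fun_add hf (hh.const_mul t)) hg hs hle

theorem setIntegral_fisDensity {X E : Type*} [MeasurableSpace X] {μ : Measure X} {s : Set X}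
    [NormedAddCommGroup E] [InnerProductSpace ℝ E] {ε k : ℝ} {p q : X → E} {a b r : X → ℝ}
    (hL : IntegrableOn (fun x => (a x - r x) * b x) s μ)
    (hG : IntegrableOn (fun x => inner ℝ (p x) (q x)) s μ)
    (hF : IntegrableOn (fun x => dwf (a x) * b x) s μ) :
    ∫ x in s, fisDensity ε k (p x) (q x) (a x) (b x) (r x) ∂μ
      = (1 / k) * (∫ x in s, (a x - r x) * b x ∂μ) + (∫ x in s, inner ℝ (p x) (q x) ∂μ)
        + (1 / ε ^ 2) * (∫ x in s, dwf (a x) * b x ∂μ) := by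
  rw [← integral_const_mul, ← integral_const_mul, ← integral_add (hL.const_mul _) hG,
    ← integral_add (Integrable.fun_add (hL.const_mul _) hG) (hF.const_mul _)]
  rfl

theorem discE_eq_setIntegral {d : ℕ} {Ω : Set (EuclideanSpace ℝ (Fin d))} {ε k : ℝ}
    {z w : EuclideanSpace ℝ (Fin d) → ℝ}
    (hJ : IntegrableOn (fun x => (1 / 2) * ‖gradient z x‖ ^ 2 + (1 / ε ^ 2) * dwF (z x)) Ω)
    (hL : IntegrableOn (fun x => (z x - w x) ^ 2) Ω) :
    discE Ω ε k z w = ∫ x in Ω, discEDensity ε k (gradient z x) (z x) (w x) := by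
  rw [discE, GLJ, ← integral_const_mul, ← integral_add hJ (hL.const_mul _)]
  rfl

theorem global_min_along_line_of_FIS_general
    (d : ℕ)
    (Ω : Set (EuclideanSpace ℝ (Fin d))) (hΩ : MeasurableSet Ω)
    (hΩfin : volume Ω < ⊤)
    (ε k : ℝ) (hk : 0 < k) (hcond : k ≤ ε ^ 2)
    (u v w : EuclideanSpace ℝ (Fin d) → ℝ)
    (hu : Differentiable ℝ u) (hv : Differentiable ℝ v)
    (hum : Measurable u) (hvm : Measurable v) (hwm : Measurable w)
    (hgum : Measurable fun x => gradient u x)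
    (hgvm : Measurable fun x => gradient v x)
    (hub : ∃ C, ∀ x ∈ Ω, |u x| ≤ C) (hvb : ∃ C, ∀ x ∈ Ω, |v x| ≤ C)
    (hwb : ∃ C, ∀ x ∈ Ω, |w x| ≤ C)
    (hgub : ∃ C, ∀ x ∈ Ω, ‖gradient u x‖ ≤ C)
    (hgvb : ∃ C, ∀ x ∈ Ω, ‖gradient v x‖ ≤ C)
    (hFIS : (1 / k) * (∫ x in Ω, (u x - w x) * v x)
        + (∫ x in Ω, (inner ℝ (gradient u x) (gradient v x) : ℝ))
        + (1 / ε ^ 2) * (∫ x in Ω, dwf (u x) * v x) = 0) :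
    ∀ t : ℝ, discE Ω ε k u w ≤ discE Ω ε k (fun x => u x + t * v x) w := by
  intro t
  have hgrad : gradient (fun x => u x + t * v x) = fun x => gradient u x + t • gradient v x :=
    funext fun x => gradient_add_const_mul (hu x) (hv x) t
  simp_rw [← Real.norm_eq_abs] at hub hvb hwb
  have hbdd := (isBounded_image_of_norm_le hub).image_prodMk <|
    (isBounded_image_of_norm_le hvb).image_prodMk <|
      (isBounded_image_of_norm_le hwb).image_prodMk <|
        (isBounded_image_of_norm_le hgub).image_prodMk (isBounded_image_of_norm_le hgvb)
  -- Every integrand below is a continuous function of the data `(u, v, w, ∇u, ∇v)`, whose image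
  -- of `Ω` has compact closure.
  have hint (Φ : ℝ → ℝ → ℝ → EuclideanSpace ℝ (Fin d) → EuclideanSpace ℝ (Fin d) → ℝ)
      (hΦ : Continuous fun p : ℝ × ℝ × ℝ × _ × _ => Φ p.1 p.2.1 p.2.2.1 p.2.2.2.1 p.2.2.2.2) :
      IntegrableOn (fun x => Φ (u x) (v x) (w x) (gradient u x) (gradient v x)) Ω :=
    integrableOn_comp_of_isBounded_image hΦ (by fun_prop) hbdd hΩ hΩfin.ne
  have hres := (setIntegral_fisDensity (hint (fun a b c _ _ => (a - c) * b) (by fun_prop))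
    (hint (fun _ _ _ p q => inner ℝ p q) (by fun_prop))
    (hint (fun a b _ _ _ => dwf a * b) (by fun_prop))).trans hFIS
  rw [discE_eq_setIntegral (hint (fun a _ _ p _ => (1 / 2) * ‖p‖ ^ 2 + (1 / ε ^ 2) * dwF a)
      (by fun_prop)) (hint (fun a _ c _ _ => (a - c) ^ 2) (by fun_prop)),
    discE_eq_setIntegral (by rw [hgrad]; exact hint (fun a b _ p q =>
      (1 / 2) * ‖p + t • q‖ ^ 2 + (1 / ε ^ 2) * dwF (a + t * b)) (by fun_prop))
      (hint (fun a b c _ _ => (a + t * b - c) ^ 2) (by fun_prop)), hgrad]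
  exact setIntegral_le_of_add_mul_le hΩ
    (hint (fun a _ c p _ => discEDensity ε k p a c) (by unfold discEDensity; fun_prop))
    (hint (fun a b c p q => discEDensity ε k (p + t • q) (a + t * b) c)
      (by unfold discEDensity; fun_prop))
    (hint (fun a b c p q => fisDensity ε k p q a b c) (by unfold fisDensity; fun_prop))
    hres t fun x _ => discEDensity_add_mul_fisDensity_le hk hcond _ _ _ _ _ t

theorem global_min_along_line_of_FIS
    (d : ℕ) (hd : 1 ≤ d)
    (Ω : Set (EuclideanSpace ℝ (Fin d))) (hΩ : MeasurableSet Ω)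
    (hΩfin : volume Ω < ⊤)
    (ε k : ℝ) (hε : 0 < ε) (hk : 0 < k) (hcond : k ≤ ε ^ 2)
    (u v w : EuclideanSpace ℝ (Fin d) → ℝ)
    (hu : Differentiable ℝ u) (hv : Differentiable ℝ v)
    (hum : Measurable u) (hvm : Measurable v) (hwm : Measurable w)
    (hgum : Measurable fun x => gradient u x)
    (hgvm : Measurable fun x => gradient v x)
    (hub : ∃ C, ∀ x ∈ Ω, |u x| ≤ C) (hvb : ∃ C, ∀ x ∈ Ω, |v x| ≤ C)
    (hwb : ∃ C, ∀ x ∈ Ω, |w x| ≤ C)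
    (hgub : ∃ C, ∀ x ∈ Ω, ‖gradient u x‖ ≤ C)
    (hgvb : ∃ C, ∀ x ∈ Ω, ‖gradient v x‖ ≤ C)
    (hFIS : (1 / k) * (∫ x in Ω, (u x - w x) * v x)
        + (∫ x in Ω, (inner ℝ (gradient u x) (gradient v x) : ℝ))
        + (1 / ε ^ 2) * (∫ x in Ω, dwf (u x) * v x) = 0) :
    ∀ t : ℝ, discE Ω ε k u w ≤ discE Ω ε k (fun x => u x + t * v x) w :=
  global_min_along_line_of_FIS_general d Ω hΩ hΩfin ε k hk hcond u v w hu hv hum hvm hwm hgum hgvm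
    hub hvb hwb hgub hgvb hFIS
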